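/- arXiv:1602.01059 — 15 statements merged into one kernel-verified Lean document; each statement's English description precedes it below -/
import Mathlib

section
/- There is no ranking-based semantics that satisfies both Cardinality Precedence (CP) and Quality Precedence (QP); i.e., no assignment of a preorder to every finite argumentation framework can satisfy CP for every framework and QP for every framework. -/
/-- An abstract argumentation framework: a finite set of arguments together with
an attack relation between them. -/
structure AF where
  args : Finset ℕ
  att : Finset (ℕ × ℕ)
  att_mem : ∀ p ∈ att, p.1 ∈ args ∧ p.2 ∈ args

namespace AF

/-- The direct attackers of an argument. -/
def attackers (F : AF) (a : ℕ) : Finset ℕ :=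
  F.args.filter (fun b => (b, a) ∈ F.att)

end AF

/-- A ranking-based semantics: it associates to every argumentation framework a
preorder (reflexive and transitive relation) on its arguments. -/
structure RBS where
  rank : AF → ℕ → ℕ → Prop
  refl : ∀ F : AF, ∀ a ∈ F.args, rank F a a
  trans : ∀ F : AF, ∀ a ∈ F.args, ∀ b ∈ F.args, ∀ c ∈ F.args,
    rank F a b → rank F b c → rank F a c

/-- Strict part of the ranking: `a ≻ b` iff `a ⪰ b` and not `b ⪰ a`. -/
def RBS.strict (σ : RBS) (F : AF) (a b : ℕ) : Prop :=
  σ.rank F a b ∧ ¬ σ.rank F b a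

/-- Cardinality Precedence: the greater the number of direct attackers of an
argument, the weaker its level of acceptability. -/
def RBS.CP (σ : RBS) : Prop :=
  ∀ F : AF, ∀ a ∈ F.args, ∀ b ∈ F.args,
    (F.attackers a).card < (F.attackers b).card → σ.strict F a b

/-- Quality Precedence: if some direct attacker of `b` is strictly more
acceptable than every direct attacker of `a`, then `a ≻ b`. -/
def RBS.QP (σ : RBS) : Prop :=
  ∀ F : AF, ∀ a ∈ F.args, ∀ b ∈ F.args,
    (∃ c ∈ F.attackers b, ∀ d ∈ F.attackers a, σ.strict F c d) → σ.strict F a b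

/-- Counterexample framework. -/
def F0 : AF where
  args := {0, 1, 2, 3, 4, 5}
  att := {(3, 0), (4, 0), (2, 1), (5, 3), (5, 4)}
  att_mem := by decide

/-- There is no ranking-based semantics satisfying both CP and QP. -/
theorem no_rbs_CP_and_QP : ¬ ∃ σ : RBS, σ.CP ∧ σ.QP := by
  rintro ⟨σ, hCP, hQP⟩
  have h10 : σ.strict F0 1 0 := hCP F0 1 (by decide) 0 (by decide) (by decide)
  have h23 : σ.strict F0 2 3 := hCP F0 2 (by decide) 3 (by decide) (by decide)
  have h24 : σ.strict F0 2 4 := hCP F0 2 (by decide) 4 (by decide) (by decide)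
  have hA0 : F0.attackers 0 = {3, 4} := by decide
  have h01 : σ.strict F0 0 1 := by
    refine hQP F0 0 (by decide) 1 (by decide) ⟨2, by decide, ?_⟩
    intro d hd
    rw [hA0] at hd
    rcases Finset.mem_insert.mp hd with h | h
    · subst h; exact h23
    · rw [Finset.mem_singleton.mp h]; exact h24
  exact h01.2 h10.1
end

section
/- There is no ranking-based semantics that satisfies both Cardinality Precedence (CP) and Addition of Defense Branch (+DB). -/
/-- `DefenseBranchAdded F a γ x n Fstar` : `Fstar = F ∪ F^γ ∪ P₊(γ a)` is obtained
from `F` by taking the disjoint union with an isomorphic copy `F^γ` of `F`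
(via `γ`, onto fresh arguments) and adding a defense branch of even length
`n ≥ 2` made of fresh arguments `x 1, …, x n`, with `x 1` attacking `γ a`. -/
def DefenseBranchAdded (F : AF) (a : ℕ) (γ x : ℕ → ℕ) (n : ℕ) (Fstar : AF) : Prop :=
  a ∈ F.args ∧ 2 ≤ n ∧ Even n ∧
  Set.InjOn γ ↑F.args ∧
  (∀ u ∈ F.args, γ u ∉ F.args) ∧
  Set.InjOn x (Set.Icc 1 n) ∧
  (∀ i ∈ Finset.Icc 1 n, x i ∉ F.args ∧ ∀ u ∈ F.args, x i ≠ γ u) ∧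
  Fstar.args = F.args ∪ F.args.image γ ∪ (Finset.Icc 1 n).image x ∧
  Fstar.att = F.att ∪ F.att.image (fun p => (γ p.1, γ p.2)) ∪
      {(x 1, γ a)} ∪ (Finset.Ico 1 n).image (fun i => (x (i + 1), x i))

/-- Strict addition of Defense Branch (⊕DB): adding a defense branch to any
argument improves its ranking. -/
def RBS.OplusDB (σ : RBS) : Prop :=
  ∀ (F : AF) (a : ℕ) (γ x : ℕ → ℕ) (n : ℕ) (Fstar : AF),
    DefenseBranchAdded F a γ x n Fstar → σ.strict Fstar (γ a) a

/-- Addition of Defense Branch (+DB): adding a defense branch to any *attacked*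
argument improves its ranking. -/
def RBS.PlusDB (σ : RBS) : Prop :=
  ∀ (F : AF) (a : ℕ) (γ x : ℕ → ℕ) (n : ℕ) (Fstar : AF),
    F.attackers a ≠ ∅ →
    DefenseBranchAdded F a γ x n Fstar → σ.strict Fstar (γ a) a

/-- There is no ranking-based semantics satisfying both CP and +DB. -/
theorem no_rbs_CP_and_PlusDB : ¬ ∃ σ : RBS, σ.CP ∧ σ.PlusDB := by
  rintro ⟨σ, hCP, hDB⟩
  set F : AF := ⟨{0}, {(0,0)}, by decide⟩ with hF
  set Fstar : AF := ⟨{0,1,2,3}, {(0,0),(1,1),(2,1),(3,2)}, by decide⟩ with hFs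
  have hdb : DefenseBranchAdded F 0 (fun u => u + 1) (fun i => i + 1) 2 Fstar := by
    refine ⟨by decide, le_refl 2, ⟨1, rfl⟩, ?_, by decide, ?_, by decide, by decide, by decide⟩
    · intro u hu v hv _
      simp only [hF, Finset.coe_singleton, Set.mem_singleton_iff] at hu hv
      omega
    · intro u hu v hv h
      exact Nat.add_right_cancel h
  have hne : F.attackers 0 ≠ ∅ := by decide
  have h1 : σ.strict Fstar 1 0 := hDB F 0 _ _ 2 Fstar hne hdb
  have hcard : (Fstar.attackers 0).card < (Fstar.attackers 1).card := by decide
  have h2 : σ.strict Fstar 0 1 := hCP Fstar 0 (by decide) 1 (by decide) hcard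
  exact h2.2 h1.1
end

section
/- There is no ranking-based semantics that satisfies both Void Precedence (VP) and Strict addition of Defense Branch (⊕DB). -/
/-- Void Precedence: a non-attacked argument is ranked strictly higher than any
attacked argument. -/
def RBS.VP (σ : RBS) : Prop :=
  ∀ F : AF, ∀ a ∈ F.args, ∀ b ∈ F.args,
    F.attackers a = ∅ → F.attackers b ≠ ∅ → σ.strict F a b

/-- There is no ranking-based semantics satisfying both VP and ⊕DB. -/
theorem no_rbs_VP_and_OplusDB : ¬ ∃ σ : RBS, σ.VP ∧ σ.OplusDB := by
  rintro ⟨σ, hVP, hDB⟩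
  set F : AF := ⟨{0}, ∅, by decide⟩ with hF
  set Fstar : AF := ⟨{0, 1, 2, 3}, {(2, 1), (3, 2)}, by decide⟩ with hFs
  have hdba : DefenseBranchAdded F 0 (fun u => u + 1) (fun i => i + 1) 2 Fstar := by
    refine ⟨by decide, le_refl 2, by decide, ?_, by decide, ?_, by decide, by decide, by decide⟩
    · intro u hu v hv h; simpa using h
    · intro u hu v hv h; simpa using h
  have h1 : σ.strict Fstar 1 0 := hDB F 0 _ _ 2 Fstar hdba
  have h2 : σ.strict Fstar 0 1 := by
    apply hVP Fstar 0 (by decide) 1 (by decide)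
    · decide
    · decide
  exact h1.2 h2.1
end

section
/- Every ranking-based semantics satisfying Strict Counter-Transitivity (SCT) also satisfies Void Precedence (VP); in fact, for every finite argumentation framework, any preorder on its arguments that satisfies SCT also satisfies VP. -/
/-- Group comparison `S₁ ≥_S S₂` (w.r.t. a preorder `r`): there is an injective
mapping `f` from `S₂` to `S₁` with `f y ⪰ y` for every `y ∈ S₂`. -/
def GroupGE (r : ℕ → ℕ → Prop) (S1 S2 : Finset ℕ) : Prop :=
  ∃ f : ℕ → ℕ, Set.InjOn f ↑S2 ∧ (∀ y ∈ S2, f y ∈ S1) ∧ ∀ y ∈ S2, r (f y) y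

/-- Strict group comparison `S₁ >_S S₂`: as `≥_S`, and moreover `|S₂| < |S₁|`
or `f y ≻ y` for some `y ∈ S₂`. -/
def GroupGT (r : ℕ → ℕ → Prop) (S1 S2 : Finset ℕ) : Prop :=
  ∃ f : ℕ → ℕ, Set.InjOn f ↑S2 ∧ (∀ y ∈ S2, f y ∈ S1) ∧ (∀ y ∈ S2, r (f y) y) ∧
    (S2.card < S1.card ∨ ∃ y ∈ S2, r (f y) y ∧ ¬ r y (f y))

/-- SCT implies VP: for every finite argumentation framework, any preorder on
its arguments satisfying Strict Counter-Transitivity also satisfies Void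
Precedence. -/
theorem sct_implies_vp (F : AF) (r : ℕ → ℕ → Prop)
    (hrefl : ∀ a ∈ F.args, r a a)
    (htrans : ∀ a ∈ F.args, ∀ b ∈ F.args, ∀ c ∈ F.args, r a b → r b c → r a c)
    (hSCT : ∀ a ∈ F.args, ∀ b ∈ F.args,
      GroupGT r (F.attackers b) (F.attackers a) → r a b ∧ ¬ r b a) :
    ∀ a ∈ F.args, ∀ b ∈ F.args,
      F.attackers a = ∅ → F.attackers b ≠ ∅ → r a b ∧ ¬ r b a := by
  intro a ha b hb hA hB
  apply hSCT a ha b hb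
  refine ⟨id, ?_, ?_, ?_, ?_⟩ <;> simp [hA]
  exact Finset.nonempty_of_ne_empty hB
end

section
/- Every ranking-based semantics satisfying both Counter-Transitivity (CT) and Strict Counter-Transitivity (SCT) also satisfies Defense Precedence (DP); in fact, for every finite argumentation framework, any preorder on its arguments satisfying both CT and SCT also satisfies DP. -/
namespace AF

/-- `F.PathTo n b a` : there is a path of length `n` from `b` to `a`,
i.e. a sequence `a₀, …, aₙ` with `a₀ = a`, `aₙ = b` and `a_{i+1}` attacks `a_i`. -/
def PathTo (F : AF) (n : ℕ) (b a : ℕ) : Prop :=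
  ∃ p : ℕ → ℕ, p 0 = a ∧ p n = b ∧ ∀ i < n, (p (i + 1), p i) ∈ F.att

/-- An AF is acyclic when no argument has a path of positive length to itself. -/
def Acyclic (F : AF) : Prop := ¬ ∃ n a, 0 < n ∧ F.PathTo n a a

/-- `a` has an attack branch: an odd-length path to `a` starting from a
non-attacked argument. -/
def HasAttackBranch (F : AF) (a : ℕ) : Prop :=
  ∃ n b, Odd n ∧ F.PathTo n b a ∧ F.attackers b = ∅

/-- A defender of `a` is an argument at the start of a path of length 2 to `a`. -/
def IsDefender (F : AF) (d a : ℕ) : Prop := F.PathTo 2 d a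

end AF

/-- CT and SCT imply DP: for every finite argumentation framework, any preorder
on its arguments satisfying both Counter-Transitivity and Strict
Counter-Transitivity also satisfies Defense Precedence. -/
theorem ct_sct_imply_dp (F : AF) (r : ℕ → ℕ → Prop)
    (hrefl : ∀ a ∈ F.args, r a a)
    (htrans : ∀ a ∈ F.args, ∀ b ∈ F.args, ∀ c ∈ F.args, r a b → r b c → r a c)
    (hCT : ∀ a ∈ F.args, ∀ b ∈ F.args,
      GroupGE r (F.attackers b) (F.attackers a) → r a b)
    (hSCT : ∀ a ∈ F.args, ∀ b ∈ F.args,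
      GroupGT r (F.attackers b) (F.attackers a) → r a b ∧ ¬ r b a) :
    ∀ a ∈ F.args, ∀ b ∈ F.args,
      (F.attackers a).card = (F.attackers b).card →
      (∃ d, F.IsDefender d a) → (¬ ∃ d, F.IsDefender d b) →
      r a b ∧ ¬ r b a := by

  intro a ha b hb hcard hdef hnodef
  -- attackers are in args
  have hattmem : ∀ c x, x ∈ F.attackers c → x ∈ F.args := by
    intro c x hx; exact Finset.mem_filter.mp hx |>.1
  -- every attacker of b is unattacked
  have hbun : ∀ y ∈ F.attackers b, F.attackers y = ∅ := by
    intro y hy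
    by_contra hne
    obtain ⟨z, hz⟩ := Finset.nonempty_iff_ne_empty.mpr hne
    exact hnodef ⟨z, fun i => if i = 0 then b else if i = 1 then y else z,
      by simp, by simp, by
        intro i hi
        interval_cases i
        · simpa using (Finset.mem_filter.mp hy).2
        · simpa using (Finset.mem_filter.mp hz).2⟩
  -- a has an attacked attacker c
  obtain ⟨d, p, hp0, hp2, hpatt⟩ := hdef
  set c := p 1 with hc
  have hca : c ∈ F.attackers a := by
    have h1 := hpatt 0 (by norm_num)
    rw [hp0] at h1
    exact Finset.mem_filter.mpr ⟨(F.att_mem _ h1).1, h1⟩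
  have hdc : d ∈ F.attackers c := by
    have h2 := hpatt 1 (by norm_num)
    rw [hp2] at h2
    exact Finset.mem_filter.mpr ⟨(F.att_mem _ h2).1, h2⟩
  -- CT: each attacker of b dominates each attacker of a
  have hge : ∀ x ∈ F.attackers a, ∀ y ∈ F.attackers b, r y x := by
    intro x hx y hy
    refine hCT y (hattmem _ _ hy) x (hattmem _ _ hx) ?_
    exact ⟨id, by simp [hbun y hy], by simp [hbun y hy], by simp [hbun y hy]⟩
  -- SCT: each attacker of b strictly dominates c
  have hgt : ∀ y ∈ F.attackers b, r y c ∧ ¬ r c y := by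
    intro y hy
    refine hSCT y (hattmem _ _ hy) c (hattmem _ _ hca) ?_
    refine ⟨id, by simp [hbun y hy], by simp [hbun y hy], by simp [hbun y hy], Or.inl ?_⟩
    simp [hbun y hy]
    exact ⟨d, hdc⟩
  -- bijection between attackers a and attackers b
  have e := Finset.equivOfCardEq hcard
  set f : ℕ → ℕ := fun x => if h : x ∈ F.attackers a then (e ⟨x, h⟩ : ℕ) else x with hf
  have hfmem : ∀ x ∈ F.attackers a, f x ∈ F.attackers b := by
    intro x hx; simp only [hf, dif_pos hx]; exact (e ⟨x, hx⟩).2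
  refine hSCT a ha b hb ⟨f, ?_, hfmem, fun x hx => hge x hx _ (hfmem x hx), Or.inr ?_⟩
  · intro x hx y hy hxy
    simp only [Finset.mem_coe] at hx hy
    simp only [hf, dif_pos hx, dif_pos hy] at hxy
    have := e.injective (Subtype.ext hxy)
    exact congrArg Subtype.val this
  · exact ⟨c, hca, hgt _ (hfmem c hca)⟩
end

section
/- Every ranking-based semantics satisfying Counter-Transitivity (CT) also satisfies Non-attacked Equivalence (NaE); in fact, for every finite argumentation framework, any preorder on its arguments satisfying CT also satisfies NaE. -/
/-- CT implies NaE: for every finite argumentation framework, any preorder on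
its arguments satisfying Counter-Transitivity also satisfies Non-attacked
Equivalence. -/
theorem ct_implies_nae (F : AF) (r : ℕ → ℕ → Prop)
    (hrefl : ∀ a ∈ F.args, r a a)
    (htrans : ∀ a ∈ F.args, ∀ b ∈ F.args, ∀ c ∈ F.args, r a b → r b c → r a c)
    (hCT : ∀ a ∈ F.args, ∀ b ∈ F.args,
      GroupGE r (F.attackers b) (F.attackers a) → r a b) :
    ∀ a ∈ F.args, ∀ b ∈ F.args,
      F.attackers a = ∅ → F.attackers b = ∅ → r a b ∧ r b a := by
  intro a ha b hb hA hB
  have h : ∀ x y : ℕ, F.attackers x = ∅ → GroupGE r (F.attackers y) (F.attackers x) := by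
    intro x y hx
    exact ⟨id, by simp [hx], by simp [hx], by simp [hx]⟩
  exact ⟨hCT a ha b hb (h a b hA), hCT b hb a ha (h b a hB)⟩
end

section
/- The Categoriser ranking-based semantics satisfies Void Precedence: for every finite argumentation framework F = ⟨A,R⟩ and every categoriser function Cat on F, if Att₁(a) = ∅ and Att₁(b) ≠ ∅ then Cat(a) > Cat(b). -/
/-- A categoriser function on `F`: values in `(0,1]` satisfying
`Cat(a) = 1 / (1 + Σ_{c ∈ Att₁(a)} Cat(c))`. -/
def IsCategoriser (F : AF) (Cat : ℕ → ℝ) : Prop :=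
  (∀ a ∈ F.args, 0 < Cat a ∧ Cat a ≤ 1) ∧
  (∀ a ∈ F.args, Cat a = 1 / (1 + ∑ c ∈ F.attackers a, Cat c))

/-- The Categoriser semantics satisfies Void Precedence. -/
theorem categoriser_vp (F : AF) (Cat : ℕ → ℝ) (hCat : IsCategoriser F Cat) :
    ∀ a ∈ F.args, ∀ b ∈ F.args,
      F.attackers a = ∅ → F.attackers b ≠ ∅ → Cat a > Cat b := by
  intro a ha b hb hA hB
  obtain ⟨hpos, heq⟩ := hCat
  have hCa : Cat a = 1 := by
    rw [heq a ha, hA]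
    simp
  have hS : 0 < ∑ c ∈ F.attackers b, Cat c := by
    apply Finset.sum_pos
    · intro c hc
      exact (hpos c (Finset.mem_of_mem_filter c hc)).1
    · exact Finset.nonempty_iff_ne_empty.mpr hB
  have hCb : Cat b < 1 := by
    rw [heq b hb]
    rw [div_lt_one (by linarith)]
    linarith
  rw [hCa]; exact hCb
end

section
/- The Categoriser ranking-based semantics satisfies Strict Counter-Transitivity: for every finite argumentation framework F = ⟨A,R⟩, every categoriser function Cat on F, and all a,b ∈ A, if Att₁(b) >_S Att₁(a) with respect to the preorder induced by Cat, then Cat(a) > Cat(b). -/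
/-- The Categoriser semantics satisfies Strict Counter-Transitivity (w.r.t. the
preorder induced by `Cat`). -/
theorem categoriser_sct (F : AF) (Cat : ℕ → ℝ) (hCat : IsCategoriser F Cat) :
    ∀ a ∈ F.args, ∀ b ∈ F.args,
      GroupGT (fun x y => Cat x ≥ Cat y) (F.attackers b) (F.attackers a) →
      Cat a > Cat b := by
  intro a ha b hb ⟨f, hinj, hmaps, hge, hstrict⟩
  obtain ⟨hpos, hfix⟩ := hCat
  have hsub : ∀ x, x ∈ F.attackers b → x ∈ F.args := by
    intro x hx; exact (Finset.mem_filter.mp hx).1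
  have hsub' : ∀ x, x ∈ F.attackers a → x ∈ F.args := by
    intro x hx; exact (Finset.mem_filter.mp hx).1
  set S1 := F.attackers b
  set S2 := F.attackers a
  have himg : S2.image f ⊆ S1 := by
    intro x hx
    obtain ⟨y, hy, rfl⟩ := Finset.mem_image.mp hx
    exact hmaps y hy
  have hsum_img : ∑ x ∈ S2.image f, Cat x = ∑ y ∈ S2, Cat (f y) :=
    Finset.sum_image (fun x hx y hy h => hinj hx hy h)
  have himg_le : ∑ x ∈ S2.image f, Cat x ≤ ∑ x ∈ S1, Cat x := by
    apply Finset.sum_le_sum_of_subset_of_nonneg himg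
    intro i hi _
    exact le_of_lt (hpos i (hsub i hi)).1
  have hlt : ∑ y ∈ S2, Cat y < ∑ x ∈ S1, Cat x := by
    rcases hstrict with hcard | ⟨y0, hy0, hge0, hlt0⟩
    · have h1 : ∑ y ∈ S2, Cat y ≤ ∑ y ∈ S2, Cat (f y) :=
        Finset.sum_le_sum (fun y hy => hge y hy)
      have hcard' : (S2.image f).card < S1.card := by
        rwa [Finset.card_image_of_injOn hinj]
      have hssub : S2.image f ⊂ S1 := lt_of_le_of_ne himg
        (fun h => absurd (h ▸ hcard') (lt_irrefl _))
      obtain ⟨i, hi1, hi2⟩ := Finset.exists_of_ssubset hssub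
      have h2 : ∑ x ∈ S2.image f, Cat x < ∑ x ∈ S1, Cat x := by
        apply Finset.sum_lt_sum_of_subset himg hi1 hi2 (hpos i (hsub i hi1)).1
        intro j hj _; exact le_of_lt (hpos j (hsub j hj)).1
      linarith [hsum_img]
    · have h1 : ∑ y ∈ S2, Cat y < ∑ y ∈ S2, Cat (f y) := by
        apply Finset.sum_lt_sum (fun y hy => hge y hy)
        exact ⟨y0, hy0, lt_of_not_ge hlt0⟩
      linarith [hsum_img, himg_le]
  have hS2nn : (0:ℝ) ≤ ∑ y ∈ S2, Cat y :=
    Finset.sum_nonneg (fun y hy => le_of_lt (hpos y (hsub' y hy)).1)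
  rw [hfix a ha, hfix b hb]
  apply one_div_lt_one_div_of_lt <;> [linarith; linarith]
end

section
/- The Social Abstract Argumentation semantics under the simple product semantic satisfies Void Precedence: for every finite argumentation framework F = ⟨A,R⟩, every ε > 0, and every social model M of F, if Att₁(a) = ∅ and Att₁(b) ≠ ∅ then M(a) > M(b). -/
/-- A social model of `F` under the simple product semantic with attenuation
factor `1/(1+ε)`: values in `[0,1]` satisfying
`M(a) = (1/(1+ε)) · ∏_{b ∈ Att₁(a)} (1 − M(b))`. -/
def IsSocialModel (F : AF) (ε : ℝ) (M : ℕ → ℝ) : Prop :=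
  (∀ a ∈ F.args, 0 ≤ M a ∧ M a ≤ 1) ∧
  (∀ a ∈ F.args, M a = (1 / (1 + ε)) * ∏ b ∈ F.attackers a, (1 - M b))

/-- The SAF semantics (simple product semantic) satisfies Void Precedence. -/
theorem saf_vp (F : AF) (ε : ℝ) (hε : 0 < ε) (M : ℕ → ℝ)
    (hM : IsSocialModel F ε M) :
    ∀ a ∈ F.args, ∀ b ∈ F.args,
      F.attackers a = ∅ → F.attackers b ≠ ∅ → M a > M b := by
  obtain ⟨hbd, heq⟩ := hM
  have hpos : (0:ℝ) < 1 + ε := by linarith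
  have hmem : ∀ c, ∀ x ∈ F.attackers c, x ∈ F.args := by
    intro c x hx
    exact Finset.mem_filter.mp hx |>.1
  -- step 1: M c ≤ 1/(1+ε) for all c ∈ args
  have hub : ∀ c ∈ F.args, M c ≤ 1 / (1 + ε) := by
    intro c hc
    rw [heq c hc]
    have hprod : ∏ b ∈ F.attackers c, (1 - M b) ≤ 1 := by
      apply Finset.prod_le_one
      · intro i hi
        have := hbd i (hmem c i hi)
        linarith [this.2]
      · intro i hi
        have := hbd i (hmem c i hi)
        linarith [this.1]
    have h0 : 0 < 1 / (1 + ε) := by positivity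
    nlinarith
  -- step 2: M c > 0 for all c ∈ args
  have hlb : ∀ c ∈ F.args, 0 < M c := by
    intro c hc
    rw [heq c hc]
    have hprod : 0 < ∏ b ∈ F.attackers c, (1 - M b) := by
      apply Finset.prod_pos
      intro i hi
      have := hub i (hmem c i hi)
      have h1 : 1 / (1 + ε) < 1 := by
        rw [div_lt_one hpos]; linarith
      linarith
    positivity
  intro a ha b hb hae hbne
  rw [heq a ha, heq b hb, hae]
  simp only [Finset.prod_empty, mul_one]
  have hprodlt : ∏ c ∈ F.attackers b, (1 - M c) < 1 := by
    obtain ⟨x, hx⟩ := Finset.nonempty_iff_ne_empty.mpr hbne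
    rw [← Finset.mul_prod_erase _ _ hx]
    have hx1 : 1 - M x < 1 := by have := hlb x (hmem b x hx); linarith
    have hx0 : 0 ≤ 1 - M x := by have := hbd x (hmem b x hx); linarith [this.2]
    have hrest : ∏ c ∈ (F.attackers b).erase x, (1 - M c) ≤ 1 := by
      apply Finset.prod_le_one
      · intro i hi
        have := hbd i (hmem b i (Finset.mem_of_mem_erase hi))
        linarith [this.2]
      · intro i hi
        have := hbd i (hmem b i (Finset.mem_of_mem_erase hi))
        linarith [this.1]
    have hrest0 : 0 ≤ ∏ c ∈ (F.attackers b).erase x, (1 - M c) := by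
      apply Finset.prod_nonneg
      intro i hi
      have := hbd i (hmem b i (Finset.mem_of_mem_erase hi))
      linarith [this.2]
    nlinarith
  have : 0 < 1 / (1 + ε) := by positivity
  nlinarith
end

section
/- The Social Abstract Argumentation semantics under the simple product semantic satisfies Strict Counter-Transitivity: for every finite argumentation framework F = ⟨A,R⟩, every ε > 0, every social model M of F, and all a,b ∈ A, if Att₁(b) >_S Att₁(a) with respect to the preorder induced by M, then M(a) > M(b). -/
/-- The SAF semantics (simple product semantic) satisfies Strict
Counter-Transitivity (w.r.t. the preorder induced by `M`). -/
theorem saf_sct (F : AF) (ε : ℝ) (hε : 0 < ε) (M : ℕ → ℝ)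
    (hM : IsSocialModel F ε M) :
    ∀ a ∈ F.args, ∀ b ∈ F.args,
      GroupGT (fun x y => M x ≥ M y) (F.attackers b) (F.attackers a) →
      M a > M b := by
  classical
  obtain ⟨hbound, heq⟩ := hM
  have hc : (0:ℝ) < 1 / (1 + ε) := by positivity
  have hc1 : 1 / (1 + ε) < 1 := by
    rw [div_lt_one (by linarith)]; linarith
  have hsub : ∀ x, F.attackers x ⊆ F.args := fun x => Finset.filter_subset _ _
  -- every argument has M x < 1
  have hlt1 : ∀ x ∈ F.args, M x < 1 := by
    intro x hx
    rw [heq x hx]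
    calc (1 / (1 + ε)) * ∏ b ∈ F.attackers x, (1 - M b)
        ≤ (1 / (1 + ε)) * 1 := by
          apply mul_le_mul_of_nonneg_left _ hc.le
          apply Finset.prod_le_one
          · intro i hi; have := hbound i (hsub x hi); linarith [this.2]
          · intro i hi; have := hbound i (hsub x hi); linarith [this.1]
      _ < 1 := by rw [mul_one]; exact hc1
  -- and M x > 0
  have hpos : ∀ x ∈ F.args, 0 < M x := by
    intro x hx
    rw [heq x hx]
    apply mul_pos hc
    apply Finset.prod_pos
    intro i hi; have := hlt1 i (hsub x hi); linarith
  intro a ha b hb hGT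
  obtain ⟨f, hinj, hmap, hge, hstrict⟩ := hGT
  set Sa := F.attackers a with hSa
  set Sb := F.attackers b with hSb
  set T := Sa.image f with hT
  have hTsub : T ⊆ Sb := by
    intro x hx
    obtain ⟨y, hy, rfl⟩ := Finset.mem_image.mp hx
    exact hmap y hy
  have hcardT : T.card = Sa.card := Finset.card_image_of_injOn hinj
  -- factors are in (0,1)
  have hfac : ∀ x ∈ F.args, 0 < 1 - M x ∧ 1 - M x < 1 := by
    intro x hx
    constructor
    · linarith [hlt1 x hx]
    · linarith [hpos x hx]
  -- step 1 : prod over Sb ≤ prod over T, strict if T ⊂ Sb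
  have hsplit : ∏ x ∈ Sb, (1 - M x) = (∏ x ∈ Sb \ T, (1 - M x)) * ∏ x ∈ T, (1 - M x) :=
    (Finset.prod_sdiff hTsub).symm
  have hTpos : 0 < ∏ x ∈ T, (1 - M x) :=
    Finset.prod_pos fun i hi => (hfac i (hsub b (hTsub hi))).1
  have hdiff_le : ∏ x ∈ Sb \ T, (1 - M x) ≤ 1 := by
    apply Finset.prod_le_one
    · intro i hi; exact (hfac i (hsub b (Finset.mem_sdiff.mp hi).1)).1.le
    · intro i hi; exact (hfac i (hsub b (Finset.mem_sdiff.mp hi).1)).2.le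
  have hstep1 : ∏ x ∈ Sb, (1 - M x) ≤ ∏ x ∈ T, (1 - M x) := by
    rw [hsplit]
    nlinarith [hTpos, hdiff_le]
  -- step 2 : prod over T = prod over Sa of shifted factors
  have hstep2 : ∏ x ∈ T, (1 - M x) = ∏ y ∈ Sa, (1 - M (f y)) :=
    Finset.prod_image fun x hx y hy h => hinj hx hy h
  -- step 3 : prod over Sa of shifted factors ≤ prod over Sa
  have hle3 : ∀ y ∈ Sa, 1 - M (f y) ≤ 1 - M y := by
    intro y hy; have := hge y hy; simp only [ge_iff_le] at this; linarith
  have hpos3 : ∀ y ∈ Sa, 0 < 1 - M (f y) :=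
    fun y hy => (hfac _ (hsub b (hmap y hy))).1
  have hstep3 : ∏ y ∈ Sa, (1 - M (f y)) ≤ ∏ y ∈ Sa, (1 - M y) :=
    Finset.prod_le_prod (fun y hy => (hpos3 y hy).le) hle3
  -- combine with strictness
  have key : ∏ x ∈ Sb, (1 - M x) < ∏ y ∈ Sa, (1 - M y) := by
    rcases hstrict with hcard | ⟨y₀, hy₀, hr, hnr⟩
    · -- T ⊊ Sb, so Sb \ T nonempty with a factor < 1
      have hTlt : T.card < Sb.card := by omega
      have hne : (Sb \ T).Nonempty := by
        rw [← Finset.card_pos, Finset.card_sdiff_of_subset hTsub]; omega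
      have hdiff_lt : ∏ x ∈ Sb \ T, (1 - M x) < 1 := by
        obtain ⟨i, hi⟩ := hne
        have hrw := (Finset.mul_prod_erase (Sb \ T) (fun x => 1 - M x) hi).symm
        have hrest_le : ∏ x ∈ (Sb \ T).erase i, (1 - M x) ≤ 1 := by
          apply Finset.prod_le_one
          · intro j hj
            exact (hfac j (hsub b (Finset.mem_sdiff.mp (Finset.mem_of_mem_erase hj)).1)).1.le
          · intro j hj
            exact (hfac j (hsub b (Finset.mem_sdiff.mp (Finset.mem_of_mem_erase hj)).1)).2.le
        have hrest_pos : 0 < ∏ x ∈ (Sb \ T).erase i, (1 - M x) :=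
          Finset.prod_pos fun j hj =>
            (hfac j (hsub b (Finset.mem_sdiff.mp (Finset.mem_of_mem_erase hj)).1)).1
        have hi1 := (hfac i (hsub b (Finset.mem_sdiff.mp hi).1)).2
        have hi0 := (hfac i (hsub b (Finset.mem_sdiff.mp hi).1)).1
        rw [hrw]
        nlinarith
      calc ∏ x ∈ Sb, (1 - M x) < ∏ x ∈ T, (1 - M x) := by
            rw [hsplit]; nlinarith
        _ = ∏ y ∈ Sa, (1 - M (f y)) := hstep2
        _ ≤ ∏ y ∈ Sa, (1 - M y) := hstep3
    · have hstrict3 : ∏ y ∈ Sa, (1 - M (f y)) < ∏ y ∈ Sa, (1 - M y) := by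
        apply Finset.prod_lt_prod hpos3 hle3
        refine ⟨y₀, hy₀, ?_⟩
        simp only [ge_iff_le, not_le] at hnr
        linarith
      calc ∏ x ∈ Sb, (1 - M x) ≤ ∏ x ∈ T, (1 - M x) := hstep1
        _ = ∏ y ∈ Sa, (1 - M (f y)) := hstep2
        _ < ∏ y ∈ Sa, (1 - M y) := hstrict3
  rw [heq a ha, heq b hb]
  exact mul_lt_mul_of_pos_left key hc
end

section
/- The Discussion-based semantics satisfies Strict Counter-Transitivity: for every finite argumentation framework F = ⟨A,R⟩ and all a,b ∈ A, if Att₁(b) >_S Att₁(a) with respect to the Dbs preorder, then a ≻^{Dbs} b. -/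
namespace AF

/-- The finite set of paths of length `n` ending at `a`, each path recorded as
the list `[a₀, …, aₙ]` with `a₀ = a` and `a_{i+1}` attacking `a_i`. -/
def pathsTo (F : AF) : ℕ → ℕ → Finset (List ℕ)
  | 0, a => {[a]}
  | n + 1, a => (F.attackers a).biUnion (fun b => (F.pathsTo n b).image (fun l => a :: l))

/-- The discussion count of `a`: `Dis_i(a)` is the number of paths of length `i`
ending at `a` if `i` is odd, and its opposite if `i` is even.  Index `i` of the
vector holds `Dis_{i+1}(a)`. -/
def disVec (F : AF) (a : ℕ) (i : ℕ) : ℤ :=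
  if Odd (i + 1) then ((F.pathsTo (i + 1) a).card : ℤ)
  else -((F.pathsTo (i + 1) a).card : ℤ)

end AF

/-- Strict lexicographic comparison of integer sequences. -/
def lexLT (u v : ℕ → ℤ) : Prop := ∃ i, u i < v i ∧ ∀ j < i, u j = v j

/-- Lexicographic comparison of integer sequences. -/
def lexLE (u v : ℕ → ℤ) : Prop := u = v ∨ lexLT u v

namespace AF

lemma pathsTo_head (F : AF) : ∀ n a l, l ∈ F.pathsTo n a → l.head? = some a := by
  intro n
  induction n with
  | zero => intro a l hl; simp [pathsTo] at hl; subst hl; rfl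
  | succ n ih =>
    intro a l hl
    simp [pathsTo] at hl
    obtain ⟨b, hb, l', hl', rfl⟩ := hl
    rfl

lemma pathsTo_card (F : AF) (n a : ℕ) :
    (F.pathsTo (n+1) a).card = ∑ b ∈ F.attackers a, (F.pathsTo n b).card := by
  rw [pathsTo, Finset.card_biUnion]
  · exact Finset.sum_congr rfl fun b _ =>
      Finset.card_image_of_injective _ (fun l1 l2 h => by injection h)
  · intro b _ c _ hbc
    apply Finset.disjoint_left.mpr
    intro l hlb hlc
    simp only [Finset.mem_image] at hlb hlc
    obtain ⟨l1, h1, rfl⟩ := hlb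
    obtain ⟨l2, h2, h⟩ := hlc
    injection h with _ hl
    subst hl
    have e1 := F.pathsTo_head n b _ h1
    have e2 := F.pathsTo_head n c _ h2
    rw [e1] at e2
    exact hbc (by injection e2)

lemma disVec_zero (F : AF) (a : ℕ) : F.disVec a 0 = ((F.attackers a).card : ℤ) := by
  have h1 : (F.pathsTo 1 a).card = (F.attackers a).card := by
    rw [pathsTo_card]; simp [pathsTo]
  simp [disVec, h1]

lemma disVec_succ (F : AF) (a : ℕ) (i : ℕ) :
    F.disVec a (i+1) = -∑ c ∈ F.attackers a, F.disVec c i := by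
  have hN : ((F.pathsTo (i+1+1) a).card : ℤ)
      = ∑ c ∈ F.attackers a, ((F.pathsTo (i+1) c).card : ℤ) := by
    rw [pathsTo_card]; push_cast; ring
  by_cases h : Odd (i + 1)
  · have h2 : ¬ Odd (i + 1 + 1) := by simp [Nat.odd_add_one, h]
    simp only [disVec, if_pos h, if_neg h2, hN]
  · have h2 : Odd (i + 1 + 1) := by simp [Nat.odd_add_one, h]
    simp only [disVec, if_neg h, if_pos h2, hN, Finset.sum_neg_distrib, neg_neg]

end AF

lemma lexLT_add {u v u' v' : ℕ → ℤ} (h1 : lexLE u v) (h2 : lexLT u' v') :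
    lexLT (fun i => u i + u' i) (fun i => v i + v' i) := by
  obtain ⟨i2, hi2, hj2⟩ := h2
  rcases h1 with rfl | ⟨i1, hi1, hj1⟩
  · exact ⟨i2, by simpa using hi2, fun j hj => by simp [hj2 j hj]⟩
  · refine ⟨min i1 i2, ?_, ?_⟩
    · have hu : u (min i1 i2) ≤ v (min i1 i2) := by
        rcases lt_or_ge (min i1 i2) i1 with h | h
        · exact (hj1 _ h).le
        · rw [le_antisymm (min_le_left _ _) h]; exact hi1.le
      have hu' : u' (min i1 i2) ≤ v' (min i1 i2) := by
        rcases lt_or_ge (min i1 i2) i2 with h | h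
        · exact (hj2 _ h).le
        · rw [le_antisymm (min_le_right _ _) h]; exact hi2.le
      have : min i1 i2 = i1 ∨ min i1 i2 = i2 := by omega
      rcases this with h | h
      · have := h ▸ hi1; dsimp only; omega
      · have := h ▸ hi2; dsimp only; omega
    · intro j hj
      have := hj1 j (lt_of_lt_of_le hj (min_le_left _ _))
      have := hj2 j (lt_of_lt_of_le hj (min_le_right _ _))
      dsimp only; omega

lemma lexLT_add' {u v u' v' : ℕ → ℤ} (h1 : lexLT u v) (h2 : lexLE u' v') :
    lexLT (fun i => u i + u' i) (fun i => v i + v' i) := by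
  have := lexLT_add h2 h1
  simpa [add_comm] using this

lemma lexLE_add {u v u' v' : ℕ → ℤ} (h1 : lexLE u v) (h2 : lexLE u' v') :
    lexLE (fun i => u i + u' i) (fun i => v i + v' i) := by
  rcases h2 with rfl | h2
  · rcases h1 with rfl | h1
    · exact Or.inl rfl
    · exact Or.inr (lexLT_add' h1 (Or.inl rfl))
  · exact Or.inr (lexLT_add h1 h2)

lemma lexLE_sum (s : Finset ℕ) (g h : ℕ → ℕ → ℤ) (hle : ∀ y ∈ s, lexLE (g y) (h y)) :
    lexLE (fun i => ∑ y ∈ s, g y i) (fun i => ∑ y ∈ s, h y i) := by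
  classical
  induction s using Finset.induction with
  | empty => exact Or.inl (by funext i; simp)
  | @insert x s hx ih =>
    have e1 : (fun i => ∑ y ∈ insert x s, g y i) = fun i => g x i + ∑ y ∈ s, g y i := by
      funext i; rw [Finset.sum_insert hx]
    have e2 : (fun i => ∑ y ∈ insert x s, h y i) = fun i => h x i + ∑ y ∈ s, h y i := by
      funext i; rw [Finset.sum_insert hx]
    rw [e1, e2]
    exact lexLE_add (hle x (Finset.mem_insert_self _ _))
      (ih fun y hy => hle y (Finset.mem_insert_of_mem hy))

lemma lexLT_sum (s : Finset ℕ) (g h : ℕ → ℕ → ℤ) (hle : ∀ y ∈ s, lexLE (g y) (h y))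
    (y0 : ℕ) (hy0 : y0 ∈ s) (hstrict : lexLT (g y0) (h y0)) :
    lexLT (fun i => ∑ y ∈ s, g y i) (fun i => ∑ y ∈ s, h y i) := by
  classical
  have hx : y0 ∉ s.erase y0 := Finset.notMem_erase _ _
  have e1 : (fun i => ∑ y ∈ s, g y i) = fun i => g y0 i + ∑ y ∈ s.erase y0, g y i := by
    funext i; exact (Finset.add_sum_erase s (fun y => g y i) hy0).symm
  have e2 : (fun i => ∑ y ∈ s, h y i) = fun i => h y0 i + ∑ y ∈ s.erase y0, h y i := by
    funext i; exact (Finset.add_sum_erase s (fun y => h y i) hy0).symm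
  rw [e1, e2]
  exact lexLT_add' hstrict
    (lexLE_sum _ _ _ fun y hy => hle y (Finset.mem_of_mem_erase hy))

lemma lexLT_neg {u v : ℕ → ℤ} (h : lexLT u v) : lexLT (fun i => -v i) (fun i => -u i) := by
  obtain ⟨i, hi, hj⟩ := h
  refine ⟨i, ?_, fun j hj' => ?_⟩
  · dsimp only; omega
  · dsimp only; rw [hj j hj']

lemma lexLT_shift {u v : ℕ → ℤ} (h0 : u 0 = v 0)
    (h : lexLT (fun i => u (i+1)) (fun i => v (i+1))) : lexLT u v := by
  obtain ⟨i, hi, hj⟩ := h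
  refine ⟨i+1, hi, fun j hj' => ?_⟩
  cases j with
  | zero => exact h0
  | succ k => exact hj k (by omega)

/-- The Discussion-based semantics satisfies Strict Counter-Transitivity
(w.r.t. the Dbs preorder `a ⪰ b ↔ Dis(a) ≤_lex Dis(b)`). -/
theorem dbs_sct (F : AF) :
    ∀ a ∈ F.args, ∀ b ∈ F.args,
      GroupGT (fun x y => lexLE (F.disVec x) (F.disVec y))
        (F.attackers b) (F.attackers a) →
      lexLT (F.disVec a) (F.disVec b) := by
  intro a _ b _ hgt
  obtain ⟨f, hinj, hmap, hle, hstrict⟩ := hgt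
  have hcard : (F.attackers a).card ≤ (F.attackers b).card :=
    Finset.card_le_card_of_injOn f hmap hinj
  rcases lt_or_eq_of_le hcard with hlt | hcardeq
  · exact ⟨0, by rw [F.disVec_zero, F.disVec_zero]; exact_mod_cast hlt,
      fun j hj => absurd hj (Nat.not_lt_zero j)⟩
  · have himg : (F.attackers a).image f = F.attackers b := by
      apply Finset.eq_of_subset_of_card_le
      · intro c hc
        simp only [Finset.mem_image] at hc
        obtain ⟨y, hy, rfl⟩ := hc
        exact hmap y hy
      · rw [Finset.card_image_of_injOn hinj]
        exact le_of_eq hcardeq.symm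
    rcases hstrict with hlt2 | ⟨y0, hy0, hy0le, hy0n⟩
    · omega
    · have hy0lt : lexLT (F.disVec (f y0)) (F.disVec y0) := by
        rcases hy0le with heq | h
        · exact absurd (Or.inl heq.symm) hy0n
        · exact h
      have hsum : lexLT (fun i => ∑ y ∈ F.attackers a, F.disVec (f y) i)
          (fun i => ∑ y ∈ F.attackers a, F.disVec y i) :=
        lexLT_sum _ _ _ (fun y hy => hle y hy) y0 hy0 hy0lt
      have hsumb : ∀ i, ∑ y ∈ F.attackers a, F.disVec (f y) i
          = ∑ c ∈ F.attackers b, F.disVec c i := by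
        intro i
        rw [← himg, Finset.sum_image (fun x hx y hy h => hinj hx hy h)]
      have hneg := lexLT_neg hsum
      apply lexLT_shift
      · rw [F.disVec_zero, F.disVec_zero, hcardeq]
      · have e1 : (fun i => F.disVec a (i+1))
            = fun i => -∑ y ∈ F.attackers a, F.disVec y i := by
          funext i; exact F.disVec_succ a i
        have e2 : (fun i => F.disVec b (i+1))
            = fun i => -∑ y ∈ F.attackers a, F.disVec (f y) i := by
          funext i; rw [F.disVec_succ, hsumb i]
        rw [e1, e2]
        exact hneg
end

section
/- The Burden-based semantics satisfies Distributed-Defense Precedence: for every finite argumentation framework F = ⟨A,R⟩ and all a,b ∈ A, if |Att₁(a)| = |Att₁(b)|, the number of length-2 paths ending at a equals the number of length-2 paths ending at b, the defense of a is simple and distributed, and the defense of b is simple but not distributed, then a ≻^{Bbs} b. -/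
namespace AF

/-- The Burden numbers: `Bur₀(a) = 1` and
`Bur_i(a) = 1 + Σ_{b ∈ Att₁(a)} 1 / Bur_{i-1}(b)`. -/
noncomputable def bur (F : AF) : ℕ → ℕ → ℝ
  | 0, _ => 1
  | i + 1, a => 1 + ∑ b ∈ F.attackers a, 1 / F.bur i b

end AF

/-- Strict lexicographic comparison of real sequences. -/
def lexLTR (u v : ℕ → ℝ) : Prop := ∃ i, u i < v i ∧ ∀ j < i, u j = v j

namespace AF

/-- `d` is a defender of `a`: `d` attacks some direct attacker of `a`. -/
def IsDefenderOf (F : AF) (d a : ℕ) : Prop :=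
  ∃ c, (d, c) ∈ F.att ∧ (c, a) ∈ F.att

/-- The defense of `a` is simple: every defender of `a` attacks exactly one
direct attacker of `a`. -/
def SimpleDefense (F : AF) (a : ℕ) : Prop :=
  ∀ d, F.IsDefenderOf d a →
    ((F.attackers a).filter (fun c => (d, c) ∈ F.att)).card = 1

/-- The defense of `a` is distributed: every direct attacker of `a` is attacked
by at most one argument. -/
def DistributedDefense (F : AF) (a : ℕ) : Prop :=
  ∀ c ∈ F.attackers a, (F.attackers c).card ≤ 1

end AF

/-!
Both arguments have the same number of attackers, so their Burden numbers agree at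
indices 0 and 1, and the comparison is decided at index 2, where
`Bur₂(x) = 1 + Σ_{c ∈ Att₁(x)} 1 / (1 + |Att₁(c)|)`.
On ℕ the function `n ↦ 1 / (1 + n)` lies on the line `n ↦ 1 - n / 2` for `n ≤ 1` and
strictly above it for `n ≥ 2`. Summed over the attackers, that line gives the same value for
`a` and `b`, since it only depends on the number of attackers and the number of paths of
length 2. The sum for `a` lies on the line, and the sum for `b` lies strictly above it.
-/

lemma one_div_one_add_eq_one_sub_half {n : ℕ} (hn : n ≤ 1) :
    1 / (1 + (n : ℝ)) = 1 - n / 2 := by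
  interval_cases n <;> norm_num

lemma one_sub_half_lt_one_div_one_add {n : ℕ} (hn : 2 ≤ n) :
    1 - (n : ℝ) / 2 < 1 / (1 + n) := by
  have hpos : (0 : ℝ) < 1 / (1 + n) := by positivity
  have hn' : (2 : ℝ) ≤ n := by exact_mod_cast hn
  linarith

lemma one_sub_half_le_one_div_one_add (n : ℕ) : 1 - (n : ℝ) / 2 ≤ 1 / (1 + n) := by
  rcases le_or_gt n 1 with hn | hn
  · exact (one_div_one_add_eq_one_sub_half hn).ge
  · exact (one_sub_half_lt_one_div_one_add hn).le

lemma sum_one_sub_half_eq {ι κ : Type*} {s : Finset ι} {t : Finset κ} {m : ι → ℕ} {n : κ → ℕ}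
    (hcard : s.card = t.card) (hsum : ∑ i ∈ s, m i = ∑ j ∈ t, n j) :
    ∑ i ∈ s, (1 - (m i : ℝ) / 2) = ∑ j ∈ t, (1 - (n j : ℝ) / 2) := by
  have hsum' : ∑ i ∈ s, (m i : ℝ) = ∑ j ∈ t, (n j : ℝ) := by exact_mod_cast hsum
  simp only [Finset.sum_sub_distrib, Finset.sum_const, ← Finset.sum_div, hsum', hcard]

lemma sum_one_div_one_add_lt {ι κ : Type*} {s : Finset ι} {t : Finset κ} {m : ι → ℕ}
    {n : κ → ℕ} (hcard : s.card = t.card) (hsum : ∑ i ∈ s, m i = ∑ j ∈ t, n j)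
    (hm : ∀ i ∈ s, m i ≤ 1) (hn : ∃ j ∈ t, 2 ≤ n j) :
    ∑ i ∈ s, 1 / (1 + (m i : ℝ)) < ∑ j ∈ t, 1 / (1 + (n j : ℝ)) := by
  obtain ⟨j₀, hj₀, hnj₀⟩ := hn
  calc ∑ i ∈ s, 1 / (1 + (m i : ℝ))
      = ∑ i ∈ s, (1 - (m i : ℝ) / 2) :=
        Finset.sum_congr rfl fun i hi => one_div_one_add_eq_one_sub_half (hm i hi)
    _ = ∑ j ∈ t, (1 - (n j : ℝ) / 2) := sum_one_sub_half_eq hcard hsum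
    _ < ∑ j ∈ t, 1 / (1 + (n j : ℝ)) :=
        Finset.sum_lt_sum (fun j _ => one_sub_half_le_one_div_one_add (n j))
          ⟨j₀, hj₀, one_sub_half_lt_one_div_one_add hnj₀⟩

namespace AF

variable (F : AF)

lemma exists_eq_cons_of_mem_pathsTo {n a : ℕ} {l : List ℕ} (hl : l ∈ F.pathsTo n a) :
    ∃ t, l = a :: t := by
  cases n with
  | zero => exact ⟨[], by simpa [pathsTo] using hl⟩
  | succ n =>
    simp only [pathsTo, Finset.mem_biUnion, Finset.mem_image] at hl
    obtain ⟨_, _, t, _, rfl⟩ := hl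
    exact ⟨t, rfl⟩

lemma card_pathsTo_succ (n a : ℕ) :
    (F.pathsTo (n + 1) a).card = ∑ c ∈ F.attackers a, (F.pathsTo n c).card := by
  rw [pathsTo, Finset.card_biUnion]
  · exact Finset.sum_congr rfl fun c _ =>
      Finset.card_image_of_injective _ fun _ _ h => List.cons_injective h
  · intro c _ c' _ hne
    rw [Function.onFun, Finset.disjoint_left]
    rintro _ hl hl'
    obtain ⟨t, ht, rfl⟩ := Finset.mem_image.mp hl
    obtain ⟨t', ht', heq⟩ := Finset.mem_image.mp hl'
    obtain ⟨s, rfl⟩ := F.exists_eq_cons_of_mem_pathsTo ht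
    obtain ⟨s', rfl⟩ := F.exists_eq_cons_of_mem_pathsTo ht'
    simp only [List.cons.injEq] at heq
    exact hne heq.2.1.symm

lemma card_pathsTo_two (a : ℕ) :
    (F.pathsTo 2 a).card = ∑ c ∈ F.attackers a, (F.attackers c).card := by
  simp only [card_pathsTo_succ]
  simp [pathsTo]

lemma bur_one (a : ℕ) : F.bur 1 a = 1 + (F.attackers a).card := by
  simp [bur]

lemma bur_two (a : ℕ) :
    F.bur 2 a = 1 + ∑ c ∈ F.attackers a, 1 / (1 + ((F.attackers c).card : ℝ)) := by
  rw [bur]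
  simp only [bur_one]

lemma bur_two_lt_of_distributedDefense {a b : ℕ}
    (hcard : (F.attackers a).card = (F.attackers b).card)
    (hpaths : (F.pathsTo 2 a).card = (F.pathsTo 2 b).card)
    (ha : F.DistributedDefense a) (hb : ¬ F.DistributedDefense b) :
    F.bur 2 a < F.bur 2 b := by
  rw [card_pathsTo_two, card_pathsTo_two] at hpaths
  simp only [DistributedDefense, not_forall, not_le, exists_prop] at hb
  rw [bur_two, bur_two, add_lt_add_iff_left]
  exact sum_one_div_one_add_lt hcard hpaths ha hb

end AF

/-- The Burden-based semantics satisfies Distributed-Defense Precedence. -/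
theorem bbs_ddp (F : AF) :
    ∀ a ∈ F.args, ∀ b ∈ F.args,
      (F.attackers a).card = (F.attackers b).card →
      (F.pathsTo 2 a).card = (F.pathsTo 2 b).card →
      F.SimpleDefense a → F.DistributedDefense a →
      F.SimpleDefense b → ¬ F.DistributedDefense b →
      lexLTR (fun i => F.bur i a) (fun i => F.bur i b) := by
  intro a _ b _ hcard hpaths _ hdista _ hndistb
  refine ⟨2, F.bur_two_lt_of_distributedDefense hcard hpaths hdista hndistb, fun j hj => ?_⟩
  interval_cases j
  · rfl
  · simp only [AF.bur_one, hcard]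
end

section
/- The Matt & Toni game-theoretic semantics satisfies Void Precedence: for every finite argumentation framework F = ⟨A,R⟩ and all a,b ∈ A, if Att₁(a) = ∅ and Att₁(b) ≠ ∅ then s(a) > s(b); indeed s(a) = 1 and s(b) < 1. -/
/-- `f(n) = n / (n+1)`. -/
noncomputable def mtf (n : ℕ) : ℝ := (n : ℝ) / ((n : ℝ) + 1)

namespace AF

/-- The set of attacks from `X` to `Y`: `Y^{←X} = {(x,y) ∈ X × Y | (x,y) ∈ R}`. -/
def attacksFrom (F : AF) (X Y : Finset ℕ) : Finset (ℕ × ℕ) :=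
  (X ×ˢ Y).filter (fun p => p ∈ F.att)

/-- Degree of acceptability `φ(P,O) = ½ [1 + f(|O^{←P}|) − f(|P^{←O}|)]`. -/
noncomputable def phi (F : AF) (P O : Finset ℕ) : ℝ :=
  (1 + mtf (F.attacksFrom P O).card - mtf (F.attacksFrom O P).card) / 2

open scoped Classical in
/-- The rewards of the proponent: `0` if `P` contains an internal attack, `1` if
`O` does not attack `P`, and `φ(P,O)` otherwise. -/
noncomputable def reward (F : AF) (P O : Finset ℕ) : ℝ :=
  if ∃ x ∈ P, ∃ y ∈ P, (x, y) ∈ F.att then 0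
  else if (F.attacksFrom O P).card = 0 then 1
  else F.phi P O

/-- The proponent's pure strategies for `a`: subsets of `A` containing `a`. -/
def propStrats (F : AF) (a : ℕ) : Finset (Finset ℕ) :=
  F.args.powerset.filter (fun P => a ∈ P)

/-- The opponent's pure strategies: all subsets of `A`. -/
def oppStrats (F : AF) : Finset (Finset ℕ) := F.args.powerset

end AF

/-- A mixed strategy (probability distribution) over a finite set of pure
strategies. -/
def IsDist (S : Finset (Finset ℕ)) (p : Finset ℕ → ℝ) : Prop :=
  (∀ P, 0 ≤ p P) ∧ ∑ P ∈ S, p P = 1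

namespace AF

/-- Expected reward `E(a,p,q) = Σ_P Σ_O p(P) q(O) r(P,O)`. -/
noncomputable def expReward (F : AF) (a : ℕ) (p q : Finset ℕ → ℝ) : ℝ :=
  ∑ P ∈ F.propStrats a, ∑ O ∈ F.oppStrats, p P * q O * F.reward P O

/-- The value of the zero-sum game for `a`:
`s(a) = max_p min_q E(a,p,q)`. -/
noncomputable def gameValue (F : AF) (a : ℕ) : ℝ :=
  ⨆ p : {p : Finset ℕ → ℝ // IsDist (F.propStrats a) p},
    ⨅ q : {q : Finset ℕ → ℝ // IsDist F.oppStrats q}, F.expReward a p.1 q.1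

end AF

/-! ### Auxiliary lemmas -/

lemma mtf_nonneg (n : ℕ) : 0 ≤ mtf n := by
  unfold mtf; positivity

lemma mtf_lt_one (n : ℕ) : mtf n < 1 := by
  unfold mtf
  rw [div_lt_one (by positivity)]
  linarith

lemma half_le_mtf {n : ℕ} (h : 1 ≤ n) : 1/2 ≤ mtf n := by
  unfold mtf
  rw [div_le_div_iff₀ (by norm_num) (by positivity)]
  have : (1:ℝ) ≤ n := by exact_mod_cast h
  linarith

namespace AF

lemma phi_nonneg (F : AF) (P O : Finset ℕ) : 0 ≤ F.phi P O := by
  unfold phi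
  have h1 := mtf_nonneg (F.attacksFrom P O).card
  have h2 := (mtf_lt_one (F.attacksFrom O P).card).le
  linarith

lemma phi_le_one (F : AF) (P O : Finset ℕ) : F.phi P O ≤ 1 := by
  unfold phi
  have h1 := (mtf_lt_one (F.attacksFrom P O).card).le
  have h2 := mtf_nonneg (F.attacksFrom O P).card
  linarith

lemma phi_le_of_attacked (F : AF) (P O : Finset ℕ)
    (h : 1 ≤ (F.attacksFrom O P).card) : F.phi P O ≤ 3/4 := by
  unfold phi
  have h1 := (mtf_lt_one (F.attacksFrom P O).card).le
  have h2 := half_le_mtf h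
  linarith

lemma reward_nonneg (F : AF) (P O : Finset ℕ) : 0 ≤ F.reward P O := by
  unfold reward
  split_ifs
  · norm_num
  · norm_num
  · exact F.phi_nonneg P O

lemma reward_le_one (F : AF) (P O : Finset ℕ) : F.reward P O ≤ 1 := by
  unfold reward
  split_ifs
  · norm_num
  · norm_num
  · exact F.phi_le_one P O

lemma reward_le_of_attacked (F : AF) (P O : Finset ℕ)
    (h : 1 ≤ (F.attacksFrom O P).card) : F.reward P O ≤ 3/4 := by
  unfold reward
  split_ifs with h1 h2
  · norm_num
  · exact absurd h2 (by omega)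
  · exact F.phi_le_of_attacked P O h

lemma reward_unattacked (F : AF) {a : ℕ} (ha : a ∈ F.args)
    (hempty : F.attackers a = ∅) {O : Finset ℕ} (hO : O ⊆ F.args) :
    F.reward {a} O = 1 := by
  have hnoself : ∀ x, (x, a) ∉ F.att := by
    intro x hx
    have hxargs : x ∈ F.args := (F.att_mem _ hx).1
    have : x ∈ F.attackers a := Finset.mem_filter.2 ⟨hxargs, hx⟩
    simp [hempty] at this
  have h1 : ¬ ∃ x ∈ ({a} : Finset ℕ), ∃ y ∈ ({a} : Finset ℕ), (x, y) ∈ F.att := by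
    rintro ⟨x, hx, y, hy, hxy⟩
    simp only [Finset.mem_singleton] at hx hy
    subst hx; subst hy
    exact hnoself _ hxy
  have h2 : (F.attacksFrom O {a}).card = 0 := by
    rw [Finset.card_eq_zero, Finset.eq_empty_iff_forall_notMem]
    rintro ⟨x, y⟩ hmem
    rw [attacksFrom, Finset.mem_filter, Finset.mem_product] at hmem
    obtain ⟨⟨hxO, hy⟩, hatt⟩ := hmem
    simp only [Finset.mem_singleton] at hy
    subst hy
    exact hnoself x hatt
  rw [reward, if_neg h1, if_pos h2]

lemma mem_propStrats (F : AF) {a : ℕ} (ha : a ∈ F.args) :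
    ({a} : Finset ℕ) ∈ F.propStrats a := by
  simp [propStrats, Finset.singleton_subset_iff, ha]

lemma propStrats_mem_self (F : AF) {a : ℕ} {P : Finset ℕ} (hP : P ∈ F.propStrats a) :
    a ∈ P := (Finset.mem_filter.1 hP).2

lemma propStrats_subset (F : AF) {a : ℕ} {P : Finset ℕ} (hP : P ∈ F.propStrats a) :
    P ⊆ F.args := Finset.mem_powerset.1 (Finset.mem_filter.1 hP).1

lemma oppStrats_subset (F : AF) {O : Finset ℕ} (hO : O ∈ F.oppStrats) :
    O ⊆ F.args := Finset.mem_powerset.1 hO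

end AF

/-- Sum of a delta-weighted function. -/
lemma sum_delta {S : Finset (Finset ℕ)} {x : Finset ℕ} (hx : x ∈ S)
    (f : Finset ℕ → ℝ) :
    ∑ P ∈ S, (if P = x then (1:ℝ) else 0) * f P = f x := by
  rw [Finset.sum_eq_single x]
  · simp
  · intro b _ hb; simp [hb]
  · intro h; exact absurd hx h

/-- The point mass at `x` is a distribution on `S` when `x ∈ S`. -/
lemma isDist_delta {S : Finset (Finset ℕ)} {x : Finset ℕ} (hx : x ∈ S) :
    IsDist S (fun P => if P = x then (1:ℝ) else 0) := by
  constructor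
  · intro P; dsimp only; split_ifs <;> norm_num
  · simpa using sum_delta hx (fun _ => (1:ℝ))

namespace AF

lemma expReward_nonneg (F : AF) (a : ℕ) {p q : Finset ℕ → ℝ}
    (hp : ∀ P, 0 ≤ p P) (hq : ∀ O, 0 ≤ q O) :
    0 ≤ F.expReward a p q := by
  apply Finset.sum_nonneg
  intro P _
  apply Finset.sum_nonneg
  intro O _
  exact mul_nonneg (mul_nonneg (hp P) (hq O)) (F.reward_nonneg P O)

lemma expReward_le_one (F : AF) (a : ℕ) {p q : Finset ℕ → ℝ}
    (hp : IsDist (F.propStrats a) p) (hq : IsDist F.oppStrats q) :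
    F.expReward a p q ≤ 1 := by
  have key : F.expReward a p q ≤ ∑ P ∈ F.propStrats a, ∑ O ∈ F.oppStrats, p P * q O := by
    apply Finset.sum_le_sum
    intro P _
    apply Finset.sum_le_sum
    intro O _
    calc p P * q O * F.reward P O ≤ p P * q O * 1 :=
          mul_le_mul_of_nonneg_left (F.reward_le_one P O)
            (mul_nonneg (hp.1 P) (hq.1 O))
      _ = p P * q O := by ring
  calc F.expReward a p q ≤ ∑ P ∈ F.propStrats a, ∑ O ∈ F.oppStrats, p P * q O := key
    _ = (∑ P ∈ F.propStrats a, p P) * (∑ O ∈ F.oppStrats, q O) :=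
        (Finset.sum_mul_sum _ _ _ _).symm
    _ = 1 := by rw [hp.2, hq.2]; ring

lemma expReward_delta_left (F : AF) (a : ℕ) {x : Finset ℕ}
    (hx : x ∈ F.propStrats a) (q : Finset ℕ → ℝ) :
    F.expReward a (fun P => if P = x then (1:ℝ) else 0) q
      = ∑ O ∈ F.oppStrats, q O * F.reward x O := by
  unfold expReward
  have : ∀ P ∈ F.propStrats a,
      ∑ O ∈ F.oppStrats, (if P = x then (1:ℝ) else 0) * q O * F.reward P O
        = (if P = x then (1:ℝ) else 0) * ∑ O ∈ F.oppStrats, q O * F.reward P O := by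
    intro P _
    rw [Finset.mul_sum]
    apply Finset.sum_congr rfl
    intro O _; ring
  rw [Finset.sum_congr rfl this, sum_delta hx]

lemma expReward_delta_right (F : AF) (a : ℕ) (p : Finset ℕ → ℝ) {x : Finset ℕ}
    (hx : x ∈ F.oppStrats) :
    F.expReward a p (fun O => if O = x then (1:ℝ) else 0)
      = ∑ P ∈ F.propStrats a, p P * F.reward P x := by
  unfold expReward
  apply Finset.sum_congr rfl
  intro P _
  have : ∀ O ∈ F.oppStrats,
      p P * (if O = x then (1:ℝ) else 0) * F.reward P O
        = (if O = x then (1:ℝ) else 0) * (p P * F.reward P O) := by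
    intro O _; ring
  rw [Finset.sum_congr rfl this, sum_delta hx]

end AF

/-- The Matt & Toni semantics satisfies Void Precedence: a non-attacked
argument has value 1, and any attacked argument has value < 1. -/
theorem mt_vp (F : AF) :
    ∀ a ∈ F.args, ∀ b ∈ F.args,
      F.attackers a = ∅ → F.attackers b ≠ ∅ →
      F.gameValue a > F.gameValue b ∧ F.gameValue a = 1 ∧ F.gameValue b < 1 := by
  intro a ha b hb hAempty hBne
  -- basic memberships
  have hAstrat : ({a} : Finset ℕ) ∈ F.propStrats a := F.mem_propStrats ha
  have hBstrat : ({b} : Finset ℕ) ∈ F.propStrats b := F.mem_propStrats hb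
  have hEmptyOpp : (∅ : Finset ℕ) ∈ F.oppStrats := by simp [AF.oppStrats]
  -- an attacker of b
  obtain ⟨c, hc⟩ := Finset.nonempty_iff_ne_empty.2 hBne
  have hcargs : c ∈ F.args := (Finset.mem_filter.1 hc).1
  have hcatt : (c, b) ∈ F.att := (Finset.mem_filter.1 hc).2
  have hcOpp : ({c} : Finset ℕ) ∈ F.oppStrats := by
    simp [AF.oppStrats, Finset.singleton_subset_iff, hcargs]
  -- index types are nonempty
  have hPneA : Nonempty {p : Finset ℕ → ℝ // IsDist (F.propStrats a) p} :=
    ⟨⟨_, isDist_delta hAstrat⟩⟩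
  have hPneB : Nonempty {p : Finset ℕ → ℝ // IsDist (F.propStrats b) p} :=
    ⟨⟨_, isDist_delta hBstrat⟩⟩
  have hQne : Nonempty {q : Finset ℕ → ℝ // IsDist F.oppStrats q} :=
    ⟨⟨_, isDist_delta hEmptyOpp⟩⟩
  -- for any fixed distribution p, the inner inf is bounded below by 0
  have hbdd : ∀ (x : ℕ) (p : Finset ℕ → ℝ), IsDist (F.propStrats x) p →
      BddBelow (Set.range fun q : {q : Finset ℕ → ℝ // IsDist F.oppStrats q} =>
        F.expReward x p q.1) := by
    intro x p hp
    refine ⟨0, ?_⟩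
    rintro r ⟨q, rfl⟩
    exact F.expReward_nonneg x hp.1 q.2.1
  -- s(a) = 1
  have hga : F.gameValue a = 1 := by
    apply le_antisymm
    · apply Real.iSup_le _ zero_le_one
      intro p
      exact ciInf_le_of_le (hbdd a p.1 p.2) ⟨_, isDist_delta hEmptyOpp⟩
        (F.expReward_le_one a p.2 (isDist_delta hEmptyOpp))
    · have hval : ∀ q : {q : Finset ℕ → ℝ // IsDist F.oppStrats q},
          F.expReward a (fun P => if P = ({a} : Finset ℕ) then (1:ℝ) else 0) q.1 = 1 := by
        intro q
        rw [F.expReward_delta_left a hAstrat q.1]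
        have : ∀ O ∈ F.oppStrats, q.1 O * F.reward {a} O = q.1 O := by
          intro O hO
          rw [F.reward_unattacked ha hAempty (F.oppStrats_subset hO), mul_one]
        rw [Finset.sum_congr rfl this, q.2.2]
      have hBddA : BddAbove (Set.range fun p : {p : Finset ℕ → ℝ // IsDist (F.propStrats a) p} =>
          ⨅ q : {q : Finset ℕ → ℝ // IsDist F.oppStrats q}, F.expReward a p.1 q.1) := by
        refine ⟨1, ?_⟩
        rintro r ⟨p, rfl⟩
        exact ciInf_le_of_le (hbdd a p.1 p.2) ⟨_, isDist_delta hEmptyOpp⟩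
          (F.expReward_le_one a p.2 (isDist_delta hEmptyOpp))
      refine le_ciSup_of_le hBddA ⟨_, isDist_delta hAstrat⟩ ?_
      apply le_ciInf
      intro q
      rw [hval q]
  -- s(b) ≤ 3/4
  have hgb : F.gameValue b ≤ 3/4 := by
    apply Real.iSup_le _ (by norm_num)
    intro p
    refine ciInf_le_of_le (hbdd b p.1 p.2) ⟨_, isDist_delta hcOpp⟩ ?_
    rw [F.expReward_delta_right b p.1 hcOpp]
    have hle : ∀ P ∈ F.propStrats b, p.1 P * F.reward P {c} ≤ p.1 P * (3/4) := by
      intro P hP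
      apply mul_le_mul_of_nonneg_left _ (p.2.1 P)
      apply F.reward_le_of_attacked
      rw [Nat.one_le_iff_ne_zero, ← Nat.pos_iff_ne_zero, Finset.card_pos]
      refine ⟨(c, b), ?_⟩
      rw [AF.attacksFrom, Finset.mem_filter, Finset.mem_product]
      exact ⟨⟨Finset.mem_singleton_self c, F.propStrats_mem_self hP⟩, hcatt⟩
    calc ∑ P ∈ F.propStrats b, p.1 P * F.reward P {c}
        ≤ ∑ P ∈ F.propStrats b, p.1 P * (3/4) := Finset.sum_le_sum hle
      _ = (∑ P ∈ F.propStrats b, p.1 P) * (3/4) := by rw [Finset.sum_mul]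
      _ = 3/4 := by rw [p.2.2]; ring
  have hlt : F.gameValue b < 1 := lt_of_le_of_lt hgb (by norm_num)
  exact ⟨by rw [hga]; exact hlt, hga, hlt⟩
end

section
/- The Matt & Toni game-theoretic semantics satisfies Self-Contradiction: for every finite argumentation framework F = ⟨A,R⟩ and all a,b ∈ A, if (a,a) ∉ R and (b,b) ∈ R then s(a) > s(b); indeed s(b) = 0 and s(a) > 0. -/
lemma mtf_mono {m M : ℕ} (h : m ≤ M) : mtf m ≤ mtf M := by
  unfold mtf
  rw [div_le_div_iff₀ (by positivity) (by positivity)]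
  have : (m : ℝ) ≤ (M : ℝ) := by exact_mod_cast h
  nlinarith

namespace AF

lemma attacksFrom_card_le (F : AF) (X Y : Finset ℕ) :
    (F.attacksFrom X Y).card ≤ F.att.card := by
  apply Finset.card_le_card
  intro p hp
  exact (Finset.mem_filter.mp hp).2

lemma phi_lb (F : AF) (P O : Finset ℕ) :
    (1 - mtf F.att.card) / 2 ≤ F.phi P O := by
  unfold phi
  have h1 := mtf_nonneg (F.attacksFrom P O).card
  have h2 := mtf_mono (F.attacksFrom_card_le O P)
  linarith

/-- Lower bound on the reward of the singleton `{a}` for non-self-attacking `a`. -/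
lemma reward_singleton_lb (F : AF) {a : ℕ} (ha : (a, a) ∉ F.att) (O : Finset ℕ) :
    (1 - mtf F.att.card) / 2 ≤ F.reward {a} O := by
  have hc1 : (1 - mtf F.att.card) / 2 ≤ 1 := by
    have := mtf_nonneg F.att.card; linarith
  unfold reward
  rw [if_neg]
  · split_ifs with h2
    · exact hc1
    · exact F.phi_lb {a} O
  · rintro ⟨x, hx, y, hy, hxy⟩
    rw [Finset.mem_singleton] at hx hy
    subst hx; subst hy
    exact ha hxy

end AF

/-- The Dirac distribution on a pure strategy. -/
noncomputable def dirac (s : Finset ℕ) : Finset ℕ → ℝ := fun P => if P = s then 1 else 0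

lemma isDist_dirac {S : Finset (Finset ℕ)} {s : Finset ℕ} (hs : s ∈ S) :
    IsDist S (dirac s) := by
  constructor
  · intro P; unfold dirac; split_ifs <;> norm_num
  · unfold dirac
    rw [Finset.sum_ite_eq' S s (fun _ => (1 : ℝ))]
    simp [hs]

-- Main theorem ---------------------------------------------------------------

/-- The Matt & Toni semantics satisfies Self-Contradiction: a self-attacking
argument has value 0, and any non self-attacking argument has value > 0. -/
theorem mt_sc (F : AF) :
    ∀ a ∈ F.args, ∀ b ∈ F.args,
      (a, a) ∉ F.att → (b, b) ∈ F.att →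
      F.gameValue a > F.gameValue b ∧ F.gameValue b = 0 ∧ F.gameValue a > 0 := by
  intro a ha b hb haa hbb
  -- nonempty distributions
  have haP : ({a} : Finset ℕ) ∈ F.propStrats a := by
    simp [AF.propStrats, Finset.mem_filter, Finset.singleton_subset_iff, ha]
  have hbP : ({b} : Finset ℕ) ∈ F.propStrats b := by
    simp [AF.propStrats, Finset.mem_filter, Finset.singleton_subset_iff, hb]
  have hO : (∅ : Finset ℕ) ∈ F.oppStrats := Finset.empty_mem_powerset _
  haveI hne_q : Nonempty {q : Finset ℕ → ℝ // IsDist F.oppStrats q} :=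
    ⟨⟨dirac ∅, isDist_dirac hO⟩⟩
  haveI hne_pa : Nonempty {p : Finset ℕ → ℝ // IsDist (F.propStrats a) p} :=
    ⟨⟨dirac {a}, isDist_dirac haP⟩⟩
  haveI hne_pb : Nonempty {p : Finset ℕ → ℝ // IsDist (F.propStrats b) p} :=
    ⟨⟨dirac {b}, isDist_dirac hbP⟩⟩
  -- value of b is 0
  have hb0 : F.gameValue b = 0 := by
    have key : ∀ (p q : Finset ℕ → ℝ), F.expReward b p q = 0 := by
      intro p q
      unfold AF.expReward
      apply Finset.sum_eq_zero
      intro P hP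
      apply Finset.sum_eq_zero
      intro O _
      have hbP' : b ∈ P := (Finset.mem_filter.mp hP).2
      have : F.reward P O = 0 := by
        unfold AF.reward
        rw [if_pos ⟨b, hbP', b, hbP', hbb⟩]
      rw [this, mul_zero]
    unfold AF.gameValue
    have hfun : (fun p : {p : Finset ℕ → ℝ // IsDist (F.propStrats b) p} =>
        ⨅ q : {q : Finset ℕ → ℝ // IsDist F.oppStrats q}, F.expReward b p.1 q.1)
        = fun _ => (0 : ℝ) := by
      funext p
      rw [show (fun q : {q : Finset ℕ → ℝ // IsDist F.oppStrats q} =>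
        F.expReward b p.1 q.1) = fun _ => (0 : ℝ) from funext fun q => key p.1 q.1]
      exact ciInf_const
    rw [hfun, ciSup_const]
  -- value of a is positive
  set c : ℝ := (1 - mtf F.att.card) / 2 with hc
  have hcpos : 0 < c := by
    have := mtf_lt_one F.att.card; rw [hc]; linarith
  have ha_pos : 0 < F.gameValue a := by
    -- the Dirac strategy on {a} guarantees at least c
    set p0 : {p : Finset ℕ → ℝ // IsDist (F.propStrats a) p} :=
      ⟨dirac {a}, isDist_dirac haP⟩ with hp0
    have hlow : ∀ q : {q : Finset ℕ → ℝ // IsDist F.oppStrats q},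
        c ≤ F.expReward a p0.1 q.1 := by
      intro q
      have hcalc : F.expReward a p0.1 q.1
          = ∑ O ∈ F.oppStrats, q.1 O * F.reward {a} O := by
        unfold AF.expReward
        rw [Finset.sum_eq_single ({a} : Finset ℕ)]
        · apply Finset.sum_congr rfl
          intro O _
          simp [hp0, dirac]
        · intro P _ hne
          apply Finset.sum_eq_zero
          intro O _
          simp [hp0, dirac, hne]
        · intro h; exact absurd haP h
      rw [hcalc]
      calc c = ∑ O ∈ F.oppStrats, q.1 O * c := by
              rw [← Finset.sum_mul, q.2.2, one_mul]
        _ ≤ ∑ O ∈ F.oppStrats, q.1 O * F.reward {a} O := by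
              apply Finset.sum_le_sum
              intro O _
              exact mul_le_mul_of_nonneg_left (F.reward_singleton_lb haa O) (q.2.1 O)
    have hbdd : BddAbove (Set.range fun p : {p : Finset ℕ → ℝ // IsDist (F.propStrats a) p} =>
        ⨅ q : {q : Finset ℕ → ℝ // IsDist F.oppStrats q}, F.expReward a p.1 q.1) := by
      refine ⟨1, ?_⟩
      rintro x ⟨p, rfl⟩
      obtain ⟨q0⟩ := hne_q
      have hbdd_below : BddBelow (Set.range fun q : {q : Finset ℕ → ℝ // IsDist F.oppStrats q} =>
          F.expReward a p.1 q.1) := by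
        refine ⟨0, ?_⟩
        rintro x ⟨q, rfl⟩
        exact F.expReward_nonneg a p.2.1 q.2.1
      exact le_trans (ciInf_le hbdd_below q0) (F.expReward_le_one a p.2 q0.2)
    have h1 : c ≤ ⨅ q : {q : Finset ℕ → ℝ // IsDist F.oppStrats q},
        F.expReward a p0.1 q.1 := le_ciInf hlow
    have h2 := le_ciSup hbdd p0
    exact lt_of_lt_of_le hcpos (le_trans h1 h2)
  exact ⟨by rw [hb0]; exact ha_pos, hb0, ha_pos⟩
end

section
/- The grounded semantics, viewed as a two-level ranking-based semantics, satisfies Attack vs Full Defense: for every finite acyclic argumentation framework F = ⟨A,R⟩ and all a,b ∈ A, if a has no attack branch, b has exactly one direct attacker, that attacker is non-attacked, and b has no defender, then a belongs to the grounded extension and b does not (hence a ≻ b in the grounded ranking). -/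
namespace AF

/-- The characteristic function `Γ(S)`: the arguments all of whose attackers are
attacked by some member of `S`. -/
def charFun (F : AF) (S : Set ℕ) : Set ℕ :=
  {a | a ∈ F.args ∧ ∀ b, (b, a) ∈ F.att → ∃ c ∈ S, (c, b) ∈ F.att}

/-- `GE` is the grounded extension of `F`: the least fixed point of the
characteristic function. -/
def IsGroundedExt (F : AF) (GE : Set ℕ) : Prop :=
  F.charFun GE = GE ∧ ∀ S : Set ℕ, F.charFun S = S → GE ⊆ S

end AF

namespace AF

lemma path_extend (F : AF) {n d c b a : ℕ} (hcb : (c, b) ∈ F.att)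
    (hba : (b, a) ∈ F.att) (h : F.PathTo n d c) : F.PathTo (n + 2) d a := by
  obtain ⟨p, hp0, hpn, hp⟩ := h
  refine ⟨fun i => if i = 0 then a else if i = 1 then b else p (i - 2), by simp, ?_, ?_⟩
  · simp only [show n + 2 ≠ 0 by omega, show n + 2 ≠ 1 by omega, if_false,
      Nat.add_sub_cancel, hpn]
  · intro i hi
    match i with
    | 0 => simpa using hba
    | 1 => simpa [hp0] using hcb
    | (k+2) =>
      simp only [show k + 2 + 1 ≠ 0 by omega, show k + 2 + 1 ≠ 1 by omega,
        show k + 2 ≠ 0 by omega, show k + 2 ≠ 1 by omega, if_false]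
      have := hp k (by omega)
      simpa using this

lemma path_short (F : AF) (hacyc : F.Acyclic) {m b a : ℕ}
    (h : F.PathTo m b a) : m < F.args.card + 1 := by
  by_contra hm
  push_neg at hm
  obtain ⟨p, hp0, hpm, hp⟩ := h
  have hmem : ∀ i ≤ m, p i ∈ F.args := by
    intro i hi
    rcases Nat.lt_or_ge i m with h' | h'
    · exact (F.att_mem _ (hp i h')).2
    · have hieq : i = m := le_antisymm hi h'
      subst hieq
      have h1 := hp (i - 1) (by omega)
      rw [show i - 1 + 1 = i by omega] at h1
      exact (F.att_mem _ h1).1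
  have key : ∀ i j, i < j → j ≤ m → p i = p j → False := by
    intro i j hij hjm heq
    apply hacyc
    refine ⟨j - i, p i, by omega, fun t => p (i + t), rfl, ?_, ?_⟩
    · show p (i + (j - i)) = p i
      rw [show i + (j - i) = j by omega]; exact heq.symm
    · intro t ht
      show (p (i + (t + 1)), p (i + t)) ∈ F.att
      rw [show i + (t + 1) = i + t + 1 by omega]
      exact hp (i + t) (by omega)
  have hcard : F.args.card < (Finset.range (m + 1)).card := by
    simp only [Finset.card_range]; omega
  obtain ⟨i, hi, j, hj, hne, heq⟩ :=
    Finset.exists_ne_map_eq_of_card_lt_of_maps_to hcard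
      (fun i hi => hmem i (Nat.lt_succ_iff.mp (Finset.mem_range.mp hi)))
  rcases Nat.lt_or_gt_of_ne hne with h' | h'
  · exact key i j h' (Nat.lt_succ_iff.mp (Finset.mem_range.mp hj)) heq
  · exact key j i h' (Nat.lt_succ_iff.mp (Finset.mem_range.mp hi)) heq.symm

lemma mem_of_no_branch (F : AF) (GE : Set ℕ) (hGE : F.IsGroundedExt GE) :
    ∀ k, ∀ a ∈ F.args, ¬ F.HasAttackBranch a →
      (∀ m d, F.PathTo m d a → m < k) → a ∈ GE := by
  intro k
  induction k with
  | zero =>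
    intro a ha _ hb
    exact absurd (hb 0 a ⟨fun _ => a, rfl, rfl, by omega⟩) (by omega)
  | succ k ih =>
    intro a ha hnb hbound
    have hmem : a ∈ F.charFun GE := by
      refine ⟨ha, fun b hba => ?_⟩
      have hbne : F.attackers b ≠ ∅ := by
        intro h
        refine hnb ⟨1, b, ⟨0, rfl⟩, ⟨fun i => if i = 0 then a else b, rfl, by simp, ?_⟩, h⟩
        intro i hi
        interval_cases i
        simpa using hba
      obtain ⟨c, hc⟩ := Finset.nonempty_iff_ne_empty.mpr hbne
      have hcb : (c, b) ∈ F.att := (Finset.mem_filter.mp hc).2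
      have hcnb : ¬ F.HasAttackBranch c := by
        rintro ⟨n, e, hodd, hpath, he⟩
        exact hnb ⟨n + 2, e, ⟨hodd.choose + 1, by have := hodd.choose_spec; omega⟩,
          F.path_extend hcb hba hpath, he⟩
      have hcGE : c ∈ GE := ih c (F.att_mem _ hcb).1 hcnb (fun m d hp => by
        have := hbound (m + 2) d (F.path_extend hcb hba hp); omega)
      exact ⟨c, hcGE, hcb⟩
    rw [hGE.1] at hmem
    exact hmem

end AF

/-- The grounded semantics satisfies Attack vs Full Defense: in an acyclic AF,
an argument with no attack branch is in the grounded extension, while an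
argument whose single direct attacker is non-attacked (and which has no
defender) is not. -/
theorem grounded_avsfd (F : AF) (hacyc : F.Acyclic) (GE : Set ℕ)
    (hGE : F.IsGroundedExt GE) :
    ∀ a ∈ F.args, ∀ b ∈ F.args,
      ¬ F.HasAttackBranch a →
      (∃ c, F.attackers b = {c} ∧ F.attackers c = ∅) →
      (¬ ∃ d, F.IsDefender d b) →
      a ∈ GE ∧ b ∉ GE := by
  intro a ha b hb hnb hatt _hdef
  obtain ⟨c, hc1, hc2⟩ := hatt
  constructor
  · exact F.mem_of_no_branch GE hGE (F.args.card + 1) a ha hnb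
      (fun m d hp => F.path_short hacyc hp)
  · intro hbGE
    rw [← hGE.1] at hbGE
    have hcb : (c, b) ∈ F.att := by
      have : c ∈ F.attackers b := by rw [hc1]; exact Finset.mem_singleton_self c
      exact (Finset.mem_filter.mp this).2
    obtain ⟨x, hxGE, hxc⟩ := hbGE.2 c hcb
    have hx : x ∈ F.attackers c := Finset.mem_filter.mpr ⟨(F.att_mem _ hxc).1, hxc⟩
    rw [hc2] at hx
    exact absurd hx (Finset.notMem_empty x)
end
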